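/- For every n ≥ 2, if M is a countable subset of L that is dense in L with its Euclidean subspace topology, then the space (X, τ(M)) is neither perfect nor Lindelöf. -/

import Mathlib

open Metric Set TopologicalSpace

noncomputable section

/-- The last coordinate `x (n-1)` of a point of `EuclideanSpace ℝ (Fin n)`
(junk value `0` if `n = 0`). -/
def lastCoord (n : ℕ) (x : EuclideanSpace ℝ (Fin n)) : ℝ :=
  if h : 0 < n then x ⟨n - 1, Nat.sub_lt h one_pos⟩ else 0

/-- The closed upper half-space `X = {x : x (n-1) ≥ 0}`. -/
def HalfSpace (n : ℕ) : Set (EuclideanSpace ℝ (Fin n)) := {x | 0 ≤ lastCoord n x}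

/-- The open upper half-space `P = {x : x (n-1) > 0}`. -/
def OpenHalf (n : ℕ) : Set (EuclideanSpace ℝ (Fin n)) := {x | 0 < lastCoord n x}

/-- The boundary hyperplane `L = {x : x (n-1) = 0}`. -/
def Bdry (n : ℕ) : Set (EuclideanSpace ℝ (Fin n)) := {x | lastCoord n x = 0}

/-- The `n`-th standard basis vector `e` (junk value `0` if `n = 0`). -/
def eVec (n : ℕ) : EuclideanSpace ℝ (Fin n) :=
  if h : 0 < n then EuclideanSpace.single ⟨n - 1, Nat.sub_lt h one_pos⟩ (1 : ℝ) else 0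

/-- The tangent ball `B̃(a, ε) = {a} ∪ B(a + ε • e, ε)`. -/
def tangentBall (n : ℕ) (a : EuclideanSpace ℝ (Fin n)) (ε : ℝ) :
    Set (EuclideanSpace ℝ (Fin n)) :=
  {a} ∪ ball (a + ε • eVec n) ε

/-- The generating family for the topology `τ(A)` on `X`:
balls `B(a,ε)` with `a ∈ P`, `0 < ε < a (n-1)`; traces `B(a,ε) ∩ X` with `a ∈ A`, `ε > 0`;
and tangent balls `B̃(a,ε)` with `a ∈ L \ A`, `ε > 0`. -/
def niemGen (n : ℕ) (A : Set (EuclideanSpace ℝ (Fin n))) : Set (Set (HalfSpace n)) :=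
  {s | ∃ a ∈ OpenHalf n, ∃ ε, 0 < ε ∧ ε < lastCoord n a ∧
      s = Subtype.val ⁻¹' ball a ε} ∪
  {s | ∃ a ∈ A, ∃ ε, 0 < ε ∧ s = Subtype.val ⁻¹' ball a ε} ∪
  {s | ∃ a ∈ Bdry n \ A, ∃ ε, 0 < ε ∧ s = Subtype.val ⁻¹' tangentBall n a ε}

/-- The topology `τ(A)` on `X`; `τ(∅)` is the Niemytzki topology `τ_N`. -/
def tau (n : ℕ) (A : Set (EuclideanSpace ℝ (Fin n))) : TopologicalSpace (HalfSpace n) :=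
  generateFrom (niemGen n A)

/-- The inclusion of `L` into `X`. -/
def inclLX (n : ℕ) (x : Bdry n) : HalfSpace n := ⟨x.1, le_of_eq x.2.symm⟩

/-- The subspace topology `τ(A)|_L` on `L` induced from `(X, τ(A))`. -/
def tauL (n : ℕ) (A : Set (EuclideanSpace ℝ (Fin n))) : TopologicalSpace (Bdry n) :=
  TopologicalSpace.induced (inclLX n) (tau n A)

/-- A space is perfect if every closed set is a `Gδ`-set. -/
def IsPerfectSpace (X : Type*) [TopologicalSpace X] : Prop :=
  ∀ s : Set X, IsClosed s → IsGδ s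

/-- An `Fσ`-set: a countable union of closed sets. -/
def IsFsigma {X : Type*} [TopologicalSpace X] (s : Set X) : Prop :=
  ∃ F : ℕ → Set X, (∀ i, IsClosed (F i)) ∧ s = ⋃ i, F i

/-- Countably paracompact: every countable open cover admits a locally finite open refinement. -/
def CountablyParacompact (X : Type*) [TopologicalSpace X] : Prop :=
  ∀ u : ℕ → Set X, (∀ i, IsOpen (u i)) → (⋃ i, u i) = Set.univ →
    ∃ (ι : Type) (v : ι → Set X), (∀ j, IsOpen (v j)) ∧ (⋃ j, v j) = Set.univ ∧
      LocallyFinite v ∧ ∀ j, ∃ i, v j ⊆ u i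

/-- A zero set: the zero locus of a continuous real-valued function. -/
def IsZeroSet {X : Type*} [TopologicalSpace X] (s : Set X) : Prop :=
  ∃ f : X → ℝ, Continuous f ∧ s = f ⁻¹' {0}

/-- `Y` is z-embedded in `X` if every zero set of the subspace `Y`
is the trace on `Y` of a zero set of `X`. -/
def ZEmbedded {X : Type*} [TopologicalSpace X] (Y : Set X) : Prop :=
  ∀ s : Set Y, IsZeroSet s → ∃ Z : Set X, IsZeroSet Z ∧ s = Subtype.val ⁻¹' Z

/-- `Y` is `C*`-embedded in `X` if every bounded continuous real-valued function on the
subspace `Y` extends to a bounded continuous function on `X`. -/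
def CStarEmbedded {X : Type*} [TopologicalSpace X] (Y : Set X) : Prop :=
  ∀ f : Y → ℝ, Continuous f → (∃ M, ∀ y, |f y| ≤ M) →
    ∃ g : X → ℝ, Continuous g ∧ (∃ M, ∀ x, |g x| ≤ M) ∧ ∀ y : Y, g ↑y = f y
end

/-!
At a point of `M` the topology `τ(M)` has exactly the Euclidean neighbourhoods, so if the
`τ(M)`-closed set `M` were a `Gδ` in `τ(M)`, it would be a countable dense `Gδ` subset of the
hyperplane `L`, and by Baire's theorem it would meet its complement, which is also a dense `Gδ`.

For the Lindelöf property, cover the projection of `M` to a coordinate axis of `L` by an open set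
`U ⊆ ℝ` of finite measure. The points of `L` whose coordinate lies outside `U` form an uncountable
set that is closed in `τ(M)`, and discrete because a tangent ball meets `L` only at its base point.
-/

open Filter Topology MeasureTheory

theorem IsGδ.of_nhds_le {α : Type*} {t₁ t₂ : TopologicalSpace α} {s : Set α}
    (h : ∀ x ∈ s, @nhds α t₁ x ≤ @nhds α t₂ x) (hs : @IsGδ α t₂ s) : @IsGδ α t₁ s := by
  obtain ⟨T, hTo, hTc, rfl⟩ := hs
  have hT : ⋂ U ∈ T, @interior α t₁ U = ⋂₀ T := by
    refine (sInter_eq_biInter ▸ iInter₂_mono fun U _ => @interior_subset α t₁ U).antisymm ?_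
    refine fun x hx => mem_iInter₂.2 fun U hU => ?_
    exact (@mem_interior_iff_mem_nhds α t₁ _ _).2
      (h x hx (@IsOpen.mem_nhds α t₂ _ _ (hTo U hU) (hx U hU)))
  exact hT ▸ @IsGδ.biInter_of_isOpen α _ t₁ _ hTc _ fun U _ => @isOpen_interior α t₁ U

theorem Set.Countable.not_isGδ_of_dense {E : Type*} (𝕜 : Type*) [NontriviallyNormedField 𝕜]
    [CompleteSpace 𝕜] [AddCommGroup E] [Module 𝕜 E] [Nontrivial E] [TopologicalSpace E]
    [ContinuousAdd E] [ContinuousSMul 𝕜 E] [T1Space E] [BaireSpace E] {s : Set E}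
    (hs : s.Countable) (hd : Dense s) : ¬ IsGδ s := fun hG => by
  simpa using (hd.inter_of_Gδ hG hs.isGδ_compl (hs.dense_compl 𝕜)).nonempty

theorem Real.exists_isOpen_superset_not_countable_compl {s : Set ℝ} (hs : s.Countable) :
    ∃ U, s ⊆ U ∧ IsOpen U ∧ ¬ Uᶜ.Countable := by
  obtain ⟨U, hsU, hU, hμU⟩ := s.exists_isOpen_lt_of_lt (μ := volume) 1
    (by rw [hs.measure_zero]; exact one_pos)
  refine ⟨U, hsU, hU, fun hc => ?_⟩
  have := measure_union_le (μ := volume) U Uᶜ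
  rw [union_compl_self, Real.volume_univ, hc.measure_zero, add_zero] at this
  exact (this.trans_lt (hμU.trans ENNReal.one_lt_top)).false

section HalfSpaceGeometry

variable {n : ℕ}

theorem lastCoord_eq_proj (hn : 0 < n) :
    lastCoord n = EuclideanSpace.proj (⟨n - 1, Nat.sub_lt hn one_pos⟩ : Fin n) := by
  ext x
  simp [lastCoord, hn]

theorem continuous_lastCoord : Continuous (lastCoord n) := by
  rcases Nat.eq_zero_or_pos n with rfl | hn
  · exact (continuous_const (y := (0 : ℝ))).congr fun x => by simp [lastCoord]
  · rw [lastCoord_eq_proj hn]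
    exact ContinuousLinearMap.continuous _

theorem isOpen_openHalf : IsOpen (OpenHalf n) :=
  isOpen_lt continuous_const continuous_lastCoord

theorem isClosed_bdry : IsClosed (Bdry n) :=
  isClosed_eq continuous_lastCoord continuous_const

theorem bdry_eq_ker (hn : 0 < n) :
    Bdry n =
      LinearMap.ker (EuclideanSpace.projₗ (𝕜 := ℝ) (⟨n - 1, Nat.sub_lt hn one_pos⟩ : Fin n)) := by
  ext x
  simp [Bdry, lastCoord_eq_proj hn]

theorem single_mem_bdry {j : Fin n} (hj : (j : ℕ) ≠ n - 1) (r : ℝ) :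
    EuclideanSpace.single j r ∈ Bdry n := by
  have hne : (⟨n - 1, by omega⟩ : Fin n) ≠ j := fun h => hj (by simp [← h])
  simp [Bdry, lastCoord_eq_proj (by omega : 0 < n), hne]

theorem bdry_subset_halfSpace : Bdry n ⊆ HalfSpace n :=
  fun _ hx => (show lastCoord n _ = 0 from hx).ge

theorem norm_eVec_le : ‖eVec n‖ ≤ 1 := by
  unfold eVec
  split_ifs <;> simp

theorem tangentBall_subset_ball {a : EuclideanSpace ℝ (Fin n)} {ε : ℝ} (hε : 0 < ε) :
    tangentBall n a ε ⊆ ball a (2 * ε) := by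
  rintro y (rfl | hy)
  · exact mem_ball_self (by positivity)
  · calc dist y a ≤ dist y (a + ε • eVec n) + dist (a + ε • eVec n) a := dist_triangle _ _ _
      _ < ε + ε := by
        refine add_lt_add_of_lt_of_le hy ?_
        simpa [norm_smul, abs_of_pos hε] using mul_le_of_le_one_right hε.le norm_eVec_le
      _ = 2 * ε := by ring

theorem abs_lastCoord_sub_le (hn : 0 < n) (x y : EuclideanSpace ℝ (Fin n)) :
    |lastCoord n x - lastCoord n y| ≤ dist x y := by
  rw [lastCoord_eq_proj hn, ← Real.dist_eq]
  exact PiLp.dist_apply_le x y _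

theorem tangentBall_subset_insert (hn : 0 < n) {a : EuclideanSpace ℝ (Fin n)} (ha : a ∈ Bdry n)
    (ε : ℝ) : tangentBall n a ε ⊆ insert a (OpenHalf n) := by
  rintro y (rfl | hy)
  · exact mem_insert _ _
  have hc : lastCoord n (a + ε • eVec n) = ε := by
    have ha' : lastCoord n a = 0 := ha
    rw [lastCoord_eq_proj hn] at ha' ⊢
    simpa [eVec, hn] using ha'
  have := (abs_lastCoord_sub_le hn y _).trans_lt hy
  rw [hc] at this
  exact Or.inr (show 0 < lastCoord n y by linarith [(abs_lt.1 this).1])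

theorem not_isGδ_bdry (hn : 2 ≤ n) {A : Set (EuclideanSpace ℝ (Fin n))} (hc : A.Countable)
    (hd : Dense (Subtype.val ⁻¹' A : Set (Bdry n))) :
    ¬ IsGδ (Subtype.val ⁻¹' A : Set (Bdry n)) := by
  revert hd
  rw [bdry_eq_ker (by omega)]
  set K := LinearMap.ker (EuclideanSpace.projₗ (𝕜 := ℝ) (⟨n - 1, by omega⟩ : Fin n))
  have : Nontrivial K :=
    nontrivial_of_ne ⟨EuclideanSpace.single ⟨0, by omega⟩ 1, by simp [K]; omega⟩ 0 (by simp)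
  have : CompleteSpace K := FiniteDimensional.complete ℝ K
  exact (hc.preimage Subtype.val_injective).not_isGδ_of_dense ℝ

end HalfSpaceGeometry

section TauTopology

variable {n : ℕ} {A : Set (EuclideanSpace ℝ (Fin n))}

theorem exists_niemGen_subset_ball (x : HalfSpace n) {δ : ℝ} (hδ : 0 < δ) :
    ∃ s ∈ niemGen n A, x ∈ s ∧ s ⊆ Subtype.val ⁻¹' ball x.1 δ := by
  by_cases hxA : x.1 ∈ A
  · exact ⟨_, Or.inl (Or.inr ⟨x.1, hxA, δ, hδ, rfl⟩), mem_ball_self hδ, subset_rfl⟩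
  rcases (show 0 ≤ lastCoord n x.1 from x.2).lt_or_eq with hx | hx
  · refine ⟨_, Or.inl (Or.inl ⟨x.1, hx, min δ (lastCoord n x.1 / 2), by positivity, ?_, rfl⟩),
      mem_ball_self (by positivity), preimage_mono (ball_subset_ball (min_le_left _ _))⟩
    linarith [min_le_right δ (lastCoord n x.1 / 2)]
  · refine ⟨_, Or.inr ⟨x.1, ⟨hx.symm, hxA⟩, δ / 2, by positivity, rfl⟩, Or.inl rfl,
      preimage_mono ?_⟩
    simpa [mul_div_cancel₀] using tangentBall_subset_ball (n := n) (a := x.1) (half_pos hδ)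

theorem tau_le_subtype : tau n A ≤ instTopologicalSpaceSubtype := by
  refine (le_iff_nhds _ _).2 fun x V hV => ?_
  obtain ⟨δ, hδ, hV⟩ := Metric.mem_nhds_iff.1 hV
  obtain ⟨s, hs, hxs, hsub⟩ := exists_niemGen_subset_ball (A := A) x hδ
  rw [tau, nhds_generateFrom]
  exact mem_iInf_of_mem s (mem_iInf_of_mem ⟨hxs, hs⟩ (mem_principal.2 (hsub.trans hV)))

theorem mem_nhds_of_mem_niemGen {s : Set (HalfSpace n)} (hs : s ∈ niemGen n A)
    {x : HalfSpace n} (hx : x ∈ s) (hxA : x.1 ∈ A) : s ∈ 𝓝 x := by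
  have hball (c : EuclideanSpace ℝ (Fin n)) (r : ℝ) :
      IsOpen (Subtype.val ⁻¹' ball c r : Set (HalfSpace n)) :=
    isOpen_ball.preimage continuous_subtype_val
  rcases hs with (⟨a, -, ε, -, -, rfl⟩ | ⟨a, -, ε, -, rfl⟩) | ⟨a, ⟨-, haA⟩, ε, -, rfl⟩
  · exact (hball a ε).mem_nhds hx
  · exact (hball a ε).mem_nhds hx
  · rcases hx with hxa | hx
    · exact absurd (hxa ▸ hxA) haA
    · exact mem_of_superset ((hball _ ε).mem_nhds hx) (preimage_mono subset_union_right)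

theorem nhds_tau_eq {x : HalfSpace n} (hx : x.1 ∈ A) : @nhds _ (tau n A) x = 𝓝 x := by
  refine le_antisymm ((le_iff_nhds _ _).1 tau_le_subtype x) ?_
  rw [tau, nhds_generateFrom]
  exact le_iInf₂ fun s ⟨hxs, hs⟩ => le_principal_iff.2 (mem_nhds_of_mem_niemGen hs hxs hx)

theorem isOpen_tau_tangentBall {a : EuclideanSpace ℝ (Fin n)} (ha : a ∈ Bdry n) (haA : a ∉ A)
    {ε : ℝ} (hε : 0 < ε) : IsOpen[tau n A] (Subtype.val ⁻¹' tangentBall n a ε) :=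
  isOpen_generateFrom_of_mem (Or.inr ⟨a, ⟨ha, haA⟩, ε, hε, rfl⟩)

theorem isClosed_tau_preimage (hn : 0 < n) (hA : A ⊆ Bdry n) :
    IsClosed[tau n A] (Subtype.val ⁻¹' A) := by
  refine @IsClosed.mk _ (tau n A) _ ((@isOpen_iff_forall_mem_open _ (tau n A) _).2 fun x hx => ?_)
  rcases (show 0 ≤ lastCoord n x.1 from x.2).lt_or_eq with hx0 | hx0
  · refine ⟨Subtype.val ⁻¹' OpenHalf n, fun y hy hyA => ?_,
      (isOpen_openHalf.preimage continuous_subtype_val).mono tau_le_subtype, hx0⟩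
    exact (hy : 0 < lastCoord n y.1).ne' (hA hyA)
  · refine ⟨Subtype.val ⁻¹' tangentBall n x.1 1, fun y hy hyA => ?_,
      isOpen_tau_tangentBall hx0.symm hx one_pos, Or.inl rfl⟩
    rcases tangentBall_subset_insert hn hx0.symm 1 hy with hyx | hpos
    · exact hx (show x.1 ∈ A from hyx ▸ hyA)
    · exact (hpos : 0 < lastCoord n y.1).ne' (hA hyA)

theorem not_isPerfectSpace_tau (hn : 2 ≤ n) (hA : A ⊆ Bdry n) (hc : A.Countable)
    (hd : Dense (Subtype.val ⁻¹' A : Set (Bdry n))) : ¬ @IsPerfectSpace _ (tau n A) := by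
  intro hp
  have hX : IsGδ (Subtype.val ⁻¹' A : Set (HalfSpace n)) :=
    IsGδ.of_nhds_le (fun x hx => (nhds_tau_eq hx).ge) (hp _ (isClosed_tau_preimage (by omega) hA))
  exact not_isGδ_bdry hn hc hd
    (IsGδ.preimage (f := inclLX n) (continuous_subtype_val.subtype_mk _) hX)

theorem not_lindelofSpace_tau (hn : 2 ≤ n) (hc : A.Countable) :
    ¬ @LindelofSpace _ (tau n A) := by
  intro hL
  set j : Fin n := ⟨0, by omega⟩
  obtain ⟨U, hAU, hU, hUc⟩ := Real.exists_isOpen_superset_not_countable_compl (hc.image (· j))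
  set K : Set (HalfSpace n) := Subtype.val ⁻¹' (Bdry n ∩ (· j) ⁻¹' Uᶜ)
  have hKA (x : HalfSpace n) (hx : x ∈ K) : x.1 ∉ A :=
    fun hxA => hx.2 (hAU (mem_image_of_mem _ hxA))
  have hK : IsClosed[tau n A] K :=
    ((isClosed_bdry.inter (hU.isClosed_compl.preimage (by fun_prop))).preimage
      continuous_subtype_val).mono tau_le_subtype
  have hKd : @IsDiscrete _ (tau n A) K := by
    refine (@isDiscrete_iff_forall_mem_exists_isOpen _ (tau n A) _).2 fun x hx =>
      ⟨_, isOpen_tau_tangentBall hx.1 (hKA x hx) one_pos, ?_⟩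
    ext y
    constructor
    · rintro ⟨hy, hyK⟩
      rcases tangentBall_subset_insert (by omega) hx.1 1 hy with hyx | hpos
      · exact Subtype.ext hyx
      · exact absurd hyK.1 (hpos : 0 < lastCoord n y.1).ne'
    · rintro rfl
      exact ⟨Or.inl rfl, hx⟩
  have hKc : K.Countable := @IsLindelof.countable_of_isDiscrete _ (tau n A) _
    (@IsClosed.isLindelof _ (tau n A) _ hL hK) hKd
  refine hUc ((hKc.image fun x => x.1 j).mono fun r hr => ?_)
  have hr' : EuclideanSpace.single j r ∈ Bdry n := single_mem_bdry (show 0 ≠ n - 1 by omega) r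
  exact ⟨⟨_, bdry_subset_halfSpace hr'⟩, ⟨hr', by simpa using hr⟩, by simp⟩

end TauTopology

/-- For every `n ≥ 2`, if `M` is a countable subset of `L` dense in the Euclidean topology of
`L`, then `(X, τ(M))` is neither perfect nor Lindelöf. -/
theorem tauM_not_perfect_not_lindelof (n : ℕ) (hn : 2 ≤ n)
    (M : Set (EuclideanSpace ℝ (Fin n))) (hM : M ⊆ Bdry n) (hMc : M.Countable)
    (hMd : Dense (Subtype.val ⁻¹' M : Set (Bdry n))) :
    ¬ @IsPerfectSpace (HalfSpace n) (tau n M) ∧ ¬ @LindelofSpace (HalfSpace n) (tau n M) :=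
  ⟨not_isPerfectSpace_tau hn hM hMc hMd, not_lindelofSpace_tau hn hMc⟩
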